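/- The identity Σ_{a ∈ F_{2^r}} Σ_{b ∈ F_{2^m}, Tr_r^m(b)=0} B_{a,b} − Σ_{x ∈ S} e_x = 0 holds in ℝ^(F_{2^n}); that is, this collection of vectors is linearly dependent with these coefficients ±1. -/

import Mathlib

noncomputable section

/-- The relative trace `Tr_k^l` from `F_{2^l}` to `F_{2^k}`, written as a function on an
ambient field of characteristic two: `x ↦ x + x^(2^k) + x^(2^(2k)) + ⋯ + x^(2^(l-k))`. -/
def relTr {F : Type*} [Field F] (k l : ℕ) (x : F) : F :=
  ∑ i ∈ Finset.range (l / k), x ^ 2 ^ (k * i)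

/-- `(-1)^y` for `y ∈ F_2 ⊆ F`, identifying `F_2` with `{0,1}`. -/
def sgn {F : Type*} [Field F] [DecidableEq F] (y : F) : ℝ :=
  if y = 0 then 1 else -1

/-- The vector `B_{a,b} ∈ ℝ^F`, whose `x`-th coordinate is
`(1/2^m)·(-1)^(Tr_1^m(a·x^(2^m+1)) + Tr_1^n(b·x))`. -/
def Bvec {F : Type*} [Field F] [DecidableEq F] (m n : ℕ) (a b : F) : F → ℝ :=
  fun x => (1 / 2 ^ m : ℝ) * sgn (relTr 1 m (a * x ^ (2 ^ m + 1)) + relTr 1 n (b * x))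

/-- The standard basis vector `e_x` of `ℝ^F`. -/
def evec {F : Type*} [DecidableEq F] (x : F) : F → ℝ :=
  fun y => if y = x then 1 else 0

/-- The set `S = {x ∈ F_{2^n} : Tr_r^m(x^(2^m+1)) = 0 and x + x^(2^m) ∈ F_{2^r}}`. -/
def Sset {F : Type*} [Field F] (r m : ℕ) : Set F :=
  {x | relTr r m (x ^ (2 ^ m + 1)) = 0 ∧ (x + x ^ 2 ^ m) ^ 2 ^ r = x + x ^ 2 ^ m}

/-!
Fix `x` and put `y = x^(2^m+1)`, `u = x + x^(2^m)`; both lie in `F_{2^m}`. Since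
`Tr_1^n(b x) = Tr_1^m(b u)` for `b ∈ F_{2^m}` and `Tr_1^m(a y) = Tr_1^r(a Tr_r^m(y))` for
`a ∈ F_{2^r}`, the `x`-th coordinate of the double sum factors as
`2^(-m) (Σ_a (-1)^Tr_1^r(a Tr_r^m(y))) (Σ_b (-1)^Tr_1^m(b u))`. The first factor is
`2^r [Tr_r^m(y) = 0]` by orthogonality of additive characters. The second runs over the kernel
`B` of `Tr_r^m` on `F_{2^m}`, of size `2^(m-r)`: it is a character sum over a group, hence `0` or
`|B|`, it equals `|B|` for `u ∈ F_{2^r}`, and its total over `u ∈ F_{2^m}` is `2^m = 2^r |B|`,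
so it vanishes for every other `u`. The coordinate is therefore `[x ∈ S]`.
All cardinalities come from counting the roots of divisors of `X^(2^n) - X`.
-/

open Finset Polynomial

theorem pow_pow_of_pow_eq_self {M : Type*} [Monoid M] {a : M} {q : ℕ} (ha : a ^ q = a) (i : ℕ) :
    a ^ q ^ i = a := by
  induction i with
  | zero => simp
  | succ i ih => rw [pow_succ, pow_mul, ih, ha]

theorem pow_two_pow_eq_self_of_dvd {M : Type*} [Monoid M] {a : M} {k l : ℕ} (hkl : k ∣ l)
    (ha : a ^ 2 ^ k = a) : a ^ 2 ^ l = a := by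
  obtain ⟨s, rfl⟩ := hkl
  rw [pow_mul, pow_pow_of_pow_eq_self ha]

theorem sum_pow_two_pow_sub {R : Type*} [CommRing R] [CharP R 2] (k t : ℕ) (x : R) :
    (∑ i ∈ range t, x ^ 2 ^ (k * i)) ^ 2 ^ k - ∑ i ∈ range t, x ^ 2 ^ (k * i)
      = x ^ 2 ^ (k * t) - x := by
  rw [sum_pow_char_pow, ← sum_sub_distrib]
  convert sum_range_sub (fun i => x ^ 2 ^ (k * i)) t using 2 with i
  · rw [← pow_mul, ← pow_add, mul_add_one]
  · simp

section relTr

variable {F : Type*} [Field F]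

theorem relTr_zero (k l : ℕ) : relTr k l (0 : F) = 0 := by
  simp [relTr]

theorem relTr_mul_of_pow_eq_self {k : ℕ} (l : ℕ) {a : F} (ha : a ^ 2 ^ k = a) (x : F) :
    relTr k l (a * x) = a * relTr k l x := by
  simp only [relTr, mul_sum, mul_pow, pow_mul, pow_pow_of_pow_eq_self ha]

variable [CharP F 2]

theorem relTr_add (k l : ℕ) (x y : F) : relTr k l (x + y) = relTr k l x + relTr k l y := by
  simp only [relTr, add_pow_char_pow, sum_add_distrib]

theorem relTr_pow_sub {k l : ℕ} (hkl : k ∣ l) (x : F) :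
    relTr k l x ^ 2 ^ k - relTr k l x = x ^ 2 ^ l - x := by
  rw [relTr, sum_pow_two_pow_sub, Nat.mul_div_cancel' hkl]

theorem relTr_pow_eq_self {k l : ℕ} (hkl : k ∣ l) {x : F} (hx : x ^ 2 ^ l = x) :
    relTr k l x ^ 2 ^ k = relTr k l x := by
  rw [← sub_eq_zero, relTr_pow_sub hkl, hx, sub_self]

theorem isIdempotentElem_relTr_one {l : ℕ} {x : F} (hx : x ^ 2 ^ l = x) :
    IsIdempotentElem (relTr 1 l x) := by
  simpa [IsIdempotentElem, sq] using relTr_pow_eq_self (one_dvd l) hx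

theorem relTr_one_eq_relTr_one_relTr {k l : ℕ} (hkl : k ∣ l) (x : F) :
    relTr 1 l x = relTr 1 k (relTr k l x) := by
  obtain ⟨t, rfl⟩ := hkl
  rcases k.eq_zero_or_pos with rfl | hk
  · simp [relTr]
  simp only [relTr, Nat.div_one, one_mul, Nat.mul_div_cancel_left t hk]
  induction t with
  | zero => simp
  | succ t ih =>
    rw [Nat.mul_succ, sum_range_add, ih, sum_range_succ]
    simp only [add_pow_char_pow, ← sum_add_distrib, ← pow_mul, ← pow_add, add_comm (k * t)]

theorem relTr_one_two_mul {m : ℕ} (hm : 0 < m) (x : F) :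
    relTr 1 (2 * m) x = relTr 1 m (x + x ^ 2 ^ m) := by
  rw [relTr_one_eq_relTr_one_relTr (dvd_mul_left m 2) x]
  simp [relTr, Nat.mul_div_cancel _ hm, sum_range_succ]

end relTr

section sgn

variable {F : Type*} [Field F] [DecidableEq F]

theorem sgn_zero : sgn (0 : F) = 1 := if_pos rfl

theorem sgn_one : sgn (1 : F) = -1 := if_neg one_ne_zero

variable [CharP F 2]

theorem sgn_add {y z : F} (hy : IsIdempotentElem y) (hz : IsIdempotentElem z) :
    sgn (y + z) = sgn y * sgn z := by
  rcases IsIdempotentElem.iff_eq_zero_or_one.mp hy with rfl | rfl <;>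
    rcases IsIdempotentElem.iff_eq_zero_or_one.mp hz with rfl | rfl <;>
    simp [sgn_zero, sgn_one, CharTwo.add_self_eq_zero]

theorem sum_sgn_eq_zero_of_shift {s : Finset F} {f : F → F} {w : F}
    (hs : ∀ v ∈ s, v + w ∈ s) (hf : ∀ v ∈ s, f (v + w) = f v + 1)
    (hf₀₁ : ∀ v ∈ s, IsIdempotentElem (f v)) :
    ∑ v ∈ s, sgn (f v) = 0 := by
  refine sum_involution (fun v _ => v + w) (fun v hv => ?_) (fun v hv _ hvw => ?_) hs
    (fun v _ => by rw [add_assoc, CharTwo.add_self_eq_zero, add_zero])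
  · rw [hf v hv, sgn_add (hf₀₁ v hv) IsIdempotentElem.one, sgn_one]
    ring
  · have := hf v hv
    rw [hvw, left_eq_add] at this
    exact one_ne_zero this

end sgn

theorem X_pow_pow_sub_X_dvd {R : Type*} [CommRing R] {q k n : ℕ} (hq : 0 < q) (hkn : k ∣ n) :
    (X ^ q ^ k - X : R[X]) ∣ X ^ q ^ n - X := by
  have hX (j : ℕ) : (X ^ q ^ j - X : R[X]) = X * (X ^ (q ^ j - 1) - 1) := by
    rw [mul_sub, mul_one, ← pow_succ', Nat.sub_add_cancel (Nat.one_le_pow _ _ hq)]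
  rw [hX, hX]
  exact mul_dvd_mul_left X (dvd_pow_sub_one_of_dvd (Nat.pow_sub_one_dvd_pow_sub_one q hkn))

theorem natDegree_sum_X_pow_two_pow {R : Type*} [Semiring R] [Nontrivial R] {k : ℕ} (hk : 0 < k)
    (t : ℕ) : (∑ i ∈ range (t + 1), X ^ 2 ^ (k * i) : R[X]).natDegree = 2 ^ (k * t) := by
  have hlt {i : ℕ} (hi : i < t) : 2 ^ (k * i) < 2 ^ (k * t) :=
    Nat.pow_lt_pow_right one_lt_two (Nat.mul_lt_mul_of_pos_left hi hk)
  rw [sum_range_succ, natDegree_add_eq_right_of_natDegree_lt] <;> rw [natDegree_X_pow]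
  refine (natDegree_sum_le_of_forall_le _ _ (n := 2 ^ (k * t) - 1) fun i hi => ?_).trans_lt ?_
  · rw [natDegree_X_pow]
    have := hlt (mem_range.mp hi)
    omega
  · have := Nat.one_le_two_pow (n := k * t)
    omega

section count

variable {F : Type*} [Field F] [Fintype F] [DecidableEq F]

theorem card_filter_eval_eq_zero_of_dvd {p : F[X]} (hp : p ≠ 0)
    (hdvd : p ∣ X ^ Fintype.card F - X) : #{x : F | p.eval x = 0} = p.natDegree := by
  have hq : 1 < Fintype.card F := Fintype.one_lt_card
  have hne := FiniteField.X_pow_card_sub_X_ne_zero F hq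
  have hle : p.roots ≤ univ.val :=
    FiniteField.roots_X_pow_card_sub_X F ▸ roots.le_of_dvd hne hdvd
  have hsplits : Splits (X ^ Fintype.card F - X : F[X]) := by
    rw [splits_iff_card_roots, FiniteField.roots_X_pow_card_sub_X,
      FiniteField.X_pow_card_sub_X_natDegree_eq F hq]
    rfl
  rw [← splits_iff_card_roots.mp (hsplits.of_dvd hne hdvd),
    ← Multiset.toFinset_card_of_nodup (Multiset.nodup_of_le hle univ.nodup)]
  congr 1
  ext x
  simp [mem_roots hp]

theorem card_pow_two_pow_eq_self {n : ℕ} (hF : Fintype.card F = 2 ^ n) {k : ℕ} (hk : 0 < k)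
    (hkn : k ∣ n) :
    #{x : F | x ^ 2 ^ k = x} = 2 ^ k := by
  have h1 : 1 < 2 ^ k := Nat.one_lt_two_pow hk.ne'
  calc #{x : F | x ^ 2 ^ k = x} = #{x : F | (X ^ 2 ^ k - X : F[X]).eval x = 0} := by
        simp [sub_eq_zero]
    _ = 2 ^ k := by
      rw [card_filter_eval_eq_zero_of_dvd (FiniteField.X_pow_card_sub_X_ne_zero F h1)
        (hF ▸ X_pow_pow_sub_X_dvd two_pos hkn), FiniteField.X_pow_card_sub_X_natDegree_eq F h1]

theorem card_relTr_eq_zero [CharP F 2] {n : ℕ} (hF : Fintype.card F = 2 ^ n) {k l : ℕ}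
    (hk : 0 < k) (hkl : k ∣ l) (hl : 0 < l) (hln : l ∣ n) :
    #{x : F | x ^ 2 ^ l = x ∧ relTr k l x = 0} = 2 ^ (l - k) := by
  obtain ⟨t, rfl⟩ := hkl
  obtain ⟨t, rfl⟩ : ∃ s, t = s + 1 :=
    ⟨t - 1, by have := Nat.pos_of_mul_pos_left hl; omega⟩
  set P : F[X] := ∑ i ∈ range (t + 1), X ^ 2 ^ (k * i)
  have hdeg : P.natDegree = 2 ^ (k * t) := natDegree_sum_X_pow_two_pow hk t
  have hP : P ^ 2 ^ k - P = X ^ 2 ^ (k * (t + 1)) - X := sum_pow_two_pow_sub k (t + 1) X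
  have hPdvd : P ∣ X ^ Fintype.card F - X := by
    refine (hP ▸ dvd_sub (dvd_pow_self P (by positivity)) dvd_rfl).trans ?_
    exact hF ▸ X_pow_pow_sub_X_dvd two_pos hln
  have hPne : P ≠ 0 := ne_zero_of_natDegree_gt (hdeg ▸ Nat.two_pow_pos _)
  have heval (x : F) : P.eval x = relTr k (k * (t + 1)) x := by
    simp [P, relTr, eval_finsetSum, Nat.mul_div_cancel_left _ hk]
  rw [show k * (t + 1) - k = k * t by rw [Nat.mul_succ, Nat.add_sub_cancel], ← hdeg,
    ← card_filter_eval_eq_zero_of_dvd hPne hPdvd]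
  congr 1
  ext x
  simp only [mem_filter, mem_univ, true_and, heval, and_iff_right_iff_imp]
  intro h
  have := relTr_pow_sub (dvd_mul_right k (t + 1)) x
  rwa [h, zero_pow (by positivity), sub_zero, eq_comm, sub_eq_zero] at this

end count

section characterSums

variable {F : Type*} [Field F] [Fintype F] [DecidableEq F] [CharP F 2]

theorem sum_ker_sgn_relTr_mul_nonneg {r m : ℕ} {u : F} (hu : u ^ 2 ^ m = u) :
    0 ≤ ∑ b ∈ {b : F | b ^ 2 ^ m = b ∧ relTr r m b = 0}, sgn (relTr 1 m (b * u)) := by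
  by_cases h : ∃ w ∈ ({b : F | b ^ 2 ^ m = b ∧ relTr r m b = 0} : Finset F),
      relTr 1 m (w * u) ≠ 0
  · obtain ⟨w, hw, hwu⟩ := h
    simp only [mem_filter, mem_univ, true_and] at hw
    have hfix {v : F} (hv : v ^ 2 ^ m = v) : IsIdempotentElem (relTr 1 m (v * u)) :=
      isIdempotentElem_relTr_one (by rw [mul_pow, hv, hu])
    rw [sum_sgn_eq_zero_of_shift (w := w)]
    · intro v hv
      simp only [mem_filter, mem_univ, true_and] at hv ⊢
      rw [add_pow_char_pow, hv.1, hw.1, relTr_add, hv.2, hw.2, add_zero]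
      exact ⟨rfl, rfl⟩
    · intro v _
      rw [add_mul, relTr_add,
        (IsIdempotentElem.iff_eq_zero_or_one.mp (hfix hw.1)).resolve_left hwu]
    · intro v hv
      exact hfix (mem_filter.mp hv).2.1
  · push Not at h
    exact sum_nonneg fun b hb => by rw [h b hb, sgn_zero]; exact zero_le_one

theorem exists_pow_eq_self_relTr_ne_zero {n : ℕ} (hF : Fintype.card F = 2 ^ n) {k : ℕ}
    (hk : 0 < k) (hkn : k ∣ n) :
    ∃ a : F, a ^ 2 ^ k = a ∧ relTr 1 k a ≠ 0 := by
  by_contra! h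
  have hcard : #{x : F | x ^ 2 ^ k = x ∧ relTr 1 k x = 0} = #{x : F | x ^ 2 ^ k = x} :=
    congrArg card (filter_congr fun x _ => and_iff_left_of_imp (h x))
  rw [card_relTr_eq_zero hF one_pos (one_dvd k) hk hkn,
    card_pow_two_pow_eq_self hF hk hkn] at hcard
  exact (Nat.pow_lt_pow_right one_lt_two (Nat.sub_lt hk one_pos)).ne hcard

theorem sum_sgn_relTr_mul {n : ℕ} (hF : Fintype.card F = 2 ^ n) {k : ℕ} (hk : 0 < k)
    (hkn : k ∣ n) {c : F} (hc : c ^ 2 ^ k = c) :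
    ∑ a ∈ {a : F | a ^ 2 ^ k = a}, sgn (relTr 1 k (c * a)) = if c = 0 then 2 ^ k else 0 := by
  split_ifs with hc0
  · simp [hc0, relTr_zero, sgn_zero, card_pow_two_pow_eq_self hF hk hkn]
  obtain ⟨a₀, ha₀, ha₀tr⟩ := exists_pow_eq_self_relTr_ne_zero hF hk hkn
  have ha₀one : relTr 1 k a₀ = 1 :=
    (IsIdempotentElem.iff_eq_zero_or_one.mp (isIdempotentElem_relTr_one ha₀)).resolve_left ha₀tr
  apply sum_sgn_eq_zero_of_shift (w := c⁻¹ * a₀)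
  · intro v hv
    simp only [mem_filter, mem_univ, true_and] at hv ⊢
    rw [add_pow_char_pow, hv, mul_pow, inv_pow, hc, ha₀]
  · intro v _
    rw [mul_add, relTr_add, mul_inv_cancel_left₀ hc0, ha₀one]
  · intro v hv
    exact isIdempotentElem_relTr_one (by rw [mul_pow, hc, (mem_filter.mp hv).2])

theorem sum_ker_sgn_relTr_mul_of_pow_eq_self {n : ℕ} (hF : Fintype.card F = 2 ^ n) {r m : ℕ}
    (hr : 0 < r) (hrm : r ∣ m) (hm : 0 < m) (hmn : m ∣ n) {u : F} (hu : u ^ 2 ^ r = u) :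
    ∑ b ∈ {b : F | b ^ 2 ^ m = b ∧ relTr r m b = 0}, sgn (relTr 1 m (b * u))
      = 2 ^ (m - r) := by
  calc _ = ∑ b ∈ {b : F | b ^ 2 ^ m = b ∧ relTr r m b = 0}, (1 : ℝ) := by
        refine sum_congr rfl fun b hb => ?_
        rw [relTr_one_eq_relTr_one_relTr hrm, mul_comm, relTr_mul_of_pow_eq_self _ hu,
          (mem_filter.mp hb).2.2, mul_zero, relTr_zero, sgn_zero]
    _ = 2 ^ (m - r) := by
      rw [sum_const, card_relTr_eq_zero hF hr hrm hm hmn]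
      simp

theorem sum_sum_ker_sgn_relTr_mul {n : ℕ} (hF : Fintype.card F = 2 ^ n) (r : ℕ) {m : ℕ}
    (hm : 0 < m) (hmn : m ∣ n) :
    ∑ u ∈ {u : F | u ^ 2 ^ m = u}, ∑ b ∈ {b : F | b ^ 2 ^ m = b ∧ relTr r m b = 0},
      sgn (relTr 1 m (b * u)) = 2 ^ m := by
  have h0 : (0 : F) ∈ ({b : F | b ^ 2 ^ m = b ∧ relTr r m b = 0} : Finset F) := by
    simp [relTr_zero]
  rw [sum_comm, sum_eq_single_of_mem 0 h0]
  · simp [relTr_zero, sgn_zero, card_pow_two_pow_eq_self hF hm hmn]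
  · intro b hb hb0
    rw [sum_sgn_relTr_mul hF hm hmn (mem_filter.mp hb).2.1, if_neg hb0]

theorem sum_ker_sgn_relTr_mul {n : ℕ} (hF : Fintype.card F = 2 ^ n) {r m : ℕ}
    (hr : 0 < r) (hrm : r ∣ m) (hm : 0 < m) (hmn : m ∣ n) {u : F} (hu : u ^ 2 ^ m = u) :
    ∑ b ∈ {b : F | b ^ 2 ^ m = b ∧ relTr r m b = 0}, sgn (relTr 1 m (b * u))
      = if u ^ 2 ^ r = u then 2 ^ (m - r) else 0 := by
  split_ifs with hur
  · exact sum_ker_sgn_relTr_mul_of_pow_eq_self hF hr hrm hm hmn hur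
  set g : F → ℝ := fun u => ∑ b ∈ {b : F | b ^ 2 ^ m = b ∧ relTr r m b = 0},
    sgn (relTr 1 m (b * u))
  have hsub : ({u : F | u ^ 2 ^ m = u} : Finset F).filter (fun u => u ^ 2 ^ r = u)
      = ({u : F | u ^ 2 ^ r = u} : Finset F) := by
    rw [filter_filter]
    exact filter_congr fun u _ => and_iff_right_of_imp (pow_two_pow_eq_self_of_dvd hrm)
  have hfixed : ∑ u ∈ {u : F | u ^ 2 ^ r = u}, g u = 2 ^ m := by
    rw [sum_congr rfl fun u hu => sum_ker_sgn_relTr_mul_of_pow_eq_self hF hr hrm hm hmn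
      (mem_filter.mp hu).2, sum_const, card_pow_two_pow_eq_self hF hr (hrm.trans hmn),
      nsmul_eq_mul, Nat.cast_pow, Nat.cast_ofNat, ← pow_add,
      Nat.add_sub_cancel' (Nat.le_of_dvd hm hrm)]
  have hrest : ∑ u ∈ ({u : F | u ^ 2 ^ m = u} : Finset F).filter (fun u => ¬u ^ 2 ^ r = u), g u
      = 0 := by
    have := sum_filter_add_sum_filter_not ({u : F | u ^ 2 ^ m = u} : Finset F)
      (fun u => u ^ 2 ^ r = u) g
    rw [hsub, hfixed, sum_sum_ker_sgn_relTr_mul hF r hm hmn] at this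
    linarith
  refine (sum_eq_zero_iff_of_nonneg fun v hv => ?_).mp hrest u ?_
  · exact sum_ker_sgn_relTr_mul_nonneg (mem_filter.mp (mem_filter.mp hv).1).2
  · simp [hu, hur]

end characterSums

section quadratic

variable {F : Type*} [Field F] [Fintype F] {m : ℕ}

theorem pow_two_pow_pow_two_pow (hF : Fintype.card F = 2 ^ (2 * m)) (x : F) :
    (x ^ 2 ^ m) ^ 2 ^ m = x := by
  rw [← pow_mul, ← pow_add, ← two_mul, ← hF, FiniteField.pow_card]

theorem pow_two_pow_add_one_pow_two_pow (hF : Fintype.card F = 2 ^ (2 * m)) (x : F) :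
    (x ^ (2 ^ m + 1)) ^ 2 ^ m = x ^ (2 ^ m + 1) := by
  rw [← pow_mul, mul_comm, pow_mul, pow_succ, pow_two_pow_pow_two_pow hF, mul_comm, pow_succ]

theorem add_pow_two_pow_pow_two_pow [CharP F 2] (hF : Fintype.card F = 2 ^ (2 * m)) (x : F) :
    (x + x ^ 2 ^ m) ^ 2 ^ m = x + x ^ 2 ^ m := by
  rw [add_pow_char_pow, pow_two_pow_pow_two_pow hF, add_comm]

variable [DecidableEq F] [CharP F 2] {r : ℕ}

theorem Bvec_two_mul_apply (hF : Fintype.card F = 2 ^ (2 * m)) (hrm : r ∣ m) (hm : 0 < m)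
    {a b : F} (ha : a ^ 2 ^ r = a) (hb : b ^ 2 ^ m = b) (x : F) :
    Bvec m (2 * m) a b x = 1 / 2 ^ m * (sgn (relTr 1 r (relTr r m (x ^ (2 ^ m + 1)) * a)) *
      sgn (relTr 1 m (b * (x + x ^ 2 ^ m)))) := by
  rw [Bvec, relTr_one_two_mul hm, mul_pow, hb, ← mul_add,
    sgn_add (isIdempotentElem_relTr_one (by
      rw [mul_pow, pow_two_pow_eq_self_of_dvd hrm ha, pow_two_pow_add_one_pow_two_pow hF]))
      (isIdempotentElem_relTr_one (by rw [mul_pow, hb, add_pow_two_pow_pow_two_pow hF])),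
    relTr_one_eq_relTr_one_relTr hrm, relTr_mul_of_pow_eq_self _ ha, mul_comm a]

theorem sum_Bvec_apply (hF : Fintype.card F = 2 ^ (2 * m)) (hr : 0 < r) (hrm : r ∣ m)
    (hm : 0 < m) (x : F) :
    (∑ a ∈ {a : F | a ^ 2 ^ r = a}, ∑ b ∈ {b : F | b ^ 2 ^ m = b ∧ relTr r m b = 0},
        Bvec m (2 * m) a b) x
      = if relTr r m (x ^ (2 ^ m + 1)) = 0 ∧ (x + x ^ 2 ^ m) ^ 2 ^ r = x + x ^ 2 ^ m
        then 1 else 0 := by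
  have hmn : m ∣ 2 * m := dvd_mul_left m 2
  have hc : relTr r m (x ^ (2 ^ m + 1)) ^ 2 ^ r = relTr r m (x ^ (2 ^ m + 1)) :=
    relTr_pow_eq_self hrm (pow_two_pow_add_one_pow_two_pow hF x)
  simp only [Finset.sum_apply]
  rw [sum_congr rfl fun a ha => sum_congr rfl fun b hb =>
      Bvec_two_mul_apply hF hrm hm (mem_filter.mp ha).2 (mem_filter.mp hb).2.1 x]
  simp only [← mul_sum, ← sum_mul]
  rw [sum_sgn_relTr_mul hF hr (hrm.trans hmn) hc,
    sum_ker_sgn_relTr_mul hF hr hrm hm hmn (add_pow_two_pow_pow_two_pow hF x)]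
  split_ifs <;> simp_all [← pow_add, Nat.add_sub_cancel' (Nat.le_of_dvd hm hrm)]

end quadratic

theorem stmt5 (t r : ℕ) (ht : 0 < t) (hr : 0 < r) (m n : ℕ) (hm : m = t * r)
    (hn : n = 2 * m) (F : Type*) [Field F] [Fintype F] [DecidableEq F]
    (hF : Fintype.card F = 2 ^ n) :
    (∑ a ∈ Finset.univ.filter (fun a : F => a ^ 2 ^ r = a),
        ∑ b ∈ Finset.univ.filter (fun b : F => b ^ 2 ^ m = b ∧ relTr r m b = 0),
          Bvec m n a b) -
      (∑ x ∈ Finset.univ.filter (fun x : F =>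
          relTr r m (x ^ (2 ^ m + 1)) = 0 ∧ (x + x ^ 2 ^ m) ^ 2 ^ r = x + x ^ 2 ^ m),
        evec x) = 0 := by
  have : CharP F 2 := charP_of_card_eq_prime_pow hF
  subst hn
  have hm0 : 0 < m := hm ▸ Nat.mul_pos ht hr
  have hrm : r ∣ m := hm ▸ dvd_mul_left r t
  ext x
  simp only [Pi.sub_apply, Pi.zero_apply, sum_Bvec_apply hF hr hrm hm0, Finset.sum_apply, evec,
    sum_ite_eq, mem_filter, mem_univ, true_and, sub_self]
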